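/- Let T be a binary tree structure with at least one internal node. For all integers m and c with 1 ≤ c ≤ m ≤ L_T, the c-partitioning function of the tree class T on ℝ^ℓ satisfies π^c_T(m) = S(m, c), the Stirling number of the second kind counting the c-partitions of an m-element set. -/

import Mathlib

/-- A `c`-partition of a finite set `S`: a set of `c` pairwise disjoint nonempty
subsets (parts) whose union is `S`. -/
def IsPartition {α : Type*} (S : Finset α) (c : ℕ) (P : Finset (Finset α)) : Prop :=
  P.card = c ∧ (∀ p ∈ P, p.Nonempty) ∧
    (∀ p ∈ P, ∀ q ∈ P, p ≠ q → Disjoint p q) ∧ (∀ x, x ∈ S ↔ ∃ p ∈ P, x ∈ p)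

/-- A binary tree structure: either a leaf, or an internal node with a left and a
right subtree structure. -/
inductive TreeStruct : Type where
  | leaf : TreeStruct
  | node : TreeStruct → TreeStruct → TreeStruct
deriving DecidableEq

namespace TreeStruct

/-- The number of leaves of a binary tree structure. -/
def leaves : TreeStruct → ℕ
  | leaf => 1
  | node l r => l.leaves + r.leaves

/-- The number of internal nodes of a binary tree structure. -/
def internals : TreeStruct → ℕ
  | leaf => 0
  | node l r => l.internals + r.internals + 1

end TreeStruct

/-- A decision tree on `ℝ^ℓ` with labels in `Y`: every leaf carries a label and every
internal node carries a decision rule `(i, θ, s)` with feature `i`, threshold `θ` and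
sign `s` (`true` codes `+1`, `false` codes `-1`). -/
inductive DTree (ℓ : ℕ) (Y : Type) : Type where
  | leaf : Y → DTree ℓ Y
  | node : Fin ℓ → ℝ → Bool → DTree ℓ Y → DTree ℓ Y → DTree ℓ Y

namespace DTree

/-- The output of a decision tree on an example `x`: at a node with rule `(i, θ, s)`,
`x` is sent to the left subtree if `sign (x^i - θ) = s` (i.e. `(θ < x^i) = s`) and to
the right subtree otherwise. -/
noncomputable def eval {ℓ : ℕ} {Y : Type} : DTree ℓ Y → (Fin ℓ → ℝ) → Y
  | leaf y, _ => y
  | node i θ s l r, x => if decide (θ < x i) = s then l.eval x else r.eval x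

/-- The underlying structure of a decision tree. -/
def shape {ℓ : ℕ} {Y : Type} : DTree ℓ Y → TreeStruct
  | leaf _ => .leaf
  | node _ _ _ l r => .node l.shape r.shape

end DTree

/-- A partition `P` of a sample `S ⊆ ℝ^ℓ` is realizable by the class of decision trees
with structure `T` if there is a decision tree `t` with structure `T` (labels in `ℕ`)
such that two points of `S` lie in the same part of `P` iff `t` outputs the same label
on them. -/
def TreeRealizable (ℓ : ℕ) (T : TreeStruct) (S : Finset (Fin ℓ → ℝ))
    (P : Finset (Finset (Fin ℓ → ℝ))) : Prop :=
  ∃ t : DTree ℓ ℕ, t.shape = T ∧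
    ∀ x ∈ S, ∀ y ∈ S, ((∃ p ∈ P, x ∈ p ∧ y ∈ p) ↔ t.eval x = t.eval y)

/-- `PartSet ℓ T a S` : the set of `a`-partitions of `S` realizable by the tree class `T`. -/
def PartSet (ℓ : ℕ) (T : TreeStruct) (a : ℕ) (S : Finset (Fin ℓ → ℝ)) :
    Set (Finset (Finset (Fin ℓ → ℝ))) :=
  {P | IsPartition S a P ∧ TreeRealizable ℓ T S P}

/-- The `a`-partitioning function of the tree class `T` on `ℝ^ℓ`: the largest number of
distinct `a`-partitions realizable by `T` on a sample of `m` points. -/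
noncomputable def treePi (ℓ : ℕ) (T : TreeStruct) (a m : ℕ) : ℕ :=
  sSup {n : ℕ | ∃ S : Finset (Fin ℓ → ℝ), S.card = m ∧ n = (PartSet ℓ T a S).ncard}

/-- The Stirling number of the second kind `S(m, c)`: the number of `c`-partitions of
an `m`-element set. -/
noncomputable def stirlingSnd (m c : ℕ) : ℕ :=
  {P : Finset (Finset (Fin m)) | IsPartition Finset.univ c P}.ncard

/-!
A tree of structure `T` can label any `L_T` points with consecutive integer coordinates
`0, 1, …, m - 1` along one feature arbitrarily: split at a threshold sending the first
`min m L_{T_l}` points to the left subtree and recurse. So on such a sample every `c`-partition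
is realizable, while on any `m`-point sample the realizable `c`-partitions are among all
`c`-partitions, whose number is invariant under bijections and hence equals `S(m, c)`.
-/

section Transport

variable {α β : Type*} (e : α ↪ β)

theorem isPartition_map_iff {S : Finset α} {c : ℕ} {P : Finset (Finset α)} :
    IsPartition (S.map e) c (P.map (Finset.mapEmbedding e).toEmbedding) ↔ IsPartition S c P := by
  simp only [IsPartition, Finset.card_map, Finset.forall_mem_map, Finset.disjoint_map,
    RelEmbedding.coe_toEmbedding, ne_eq, Finset.mapEmbedding_apply, Finset.map_inj,
    Finset.map_nonempty]
  refine and_congr_right fun _ => and_congr_right fun _ => and_congr_right fun _ => ?_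
  simp only [Finset.mem_map, RelEmbedding.coe_toEmbedding, Finset.mapEmbedding_apply,
    exists_exists_and_eq_and]
  refine ⟨fun h x => by simpa using h (e x), fun h y => ⟨?_, ?_⟩⟩
  · rintro ⟨x, hx, rfl⟩
    simpa using (h x).1 hx
  · rintro ⟨p, hp, x, hx, rfl⟩
    exact ⟨x, (h x).2 ⟨p, hp, hx⟩, rfl⟩

theorem ncard_setOf_isPartition_map (S : Finset α) (c : ℕ) :
    {Q | IsPartition (S.map e) c Q}.ncard = {P | IsPartition S c P}.ncard := by
  rw [← Set.ncard_image_of_injective _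
    (Finset.map_injective (Finset.mapEmbedding e).toEmbedding)]
  congr 1
  ext Q
  constructor
  · intro hQ
    have hQS : Q ⊆ S.powerset.map (Finset.mapEmbedding e).toEmbedding := by
      intro q hq
      obtain ⟨p, hpS, rfl⟩ := Finset.subset_map_iff.mp
        fun y hy => (hQ.2.2.2 y).2 ⟨q, hq, hy⟩
      exact Finset.mem_map_of_mem _ (Finset.mem_powerset.mpr hpS)
    obtain ⟨P, -, rfl⟩ := Finset.subset_map_iff.mp hQS
    exact ⟨P, (isPartition_map_iff e).mp hQ, rfl⟩
  · rintro ⟨P, hP, rfl⟩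
    exact (isPartition_map_iff e).mpr hP

theorem ncard_setOf_isPartition_eq_stirlingSnd {S : Finset α} {m : ℕ} (hS : S.card = m)
    (c : ℕ) : {Q | IsPartition S c Q}.ncard = stirlingSnd m c := by
  let e : Fin m ↪ α :=
    ((finCongr hS.symm).trans S.equivFin.symm).toEmbedding.trans (Function.Embedding.subtype _)
  have hSe : Finset.univ.map e = S := by
    rw [← Finset.map_map, Finset.map_univ_equiv, Finset.univ_eq_attach, Finset.attach_map_val]
  rw [stirlingSnd, ← hSe, ncard_setOf_isPartition_map]

theorem finite_setOf_isPartition (S : Finset α) (c : ℕ) :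
    {P | IsPartition S c P}.Finite :=
  S.powerset.powerset.finite_toSet.subset fun _ hP =>
    Finset.mem_powerset.mpr fun p hp =>
      Finset.mem_powerset.mpr fun x hx => (hP.2.2.2 x).2 ⟨p, hp, hx⟩

end Transport

theorem IsPartition.exists_label {α : Type*} {S : Finset α} {c : ℕ} {P : Finset (Finset α)}
    (hP : IsPartition S c P) :
    ∃ f : α → ℕ, ∀ x ∈ S, ∀ y ∈ S, (∃ p ∈ P, x ∈ p ∧ y ∈ p) ↔ f x = f y := by
  classical
  obtain ⟨-, -, hdisj, hcov⟩ := hP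
  choose! part hpartP hmem using fun x (hx : x ∈ S) => (hcov x).1 hx
  have part_unique : ∀ x ∈ S, ∀ p ∈ P, x ∈ p → p = part x := fun x hx p hp hxp => by
    by_contra hne
    exact Finset.disjoint_left.mp (hdisj p hp _ (hpartP x hx) hne) hxp (hmem x hx)
  refine ⟨fun x => P.toList.idxOf (part x), fun x hx y hy => ⟨?_, fun h => ?_⟩⟩
  · rintro ⟨p, hp, hxp, hyp⟩
    dsimp only
    rw [← part_unique x hx p hp hxp, ← part_unique y hy p hp hyp]
  · have hxy : part x = part y :=
      (List.idxOf_inj (Finset.mem_toList.mpr (hpartP x hx))).mp h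
    exact ⟨part x, hpartP x hx, hmem x hx, hxy ▸ hmem y hy⟩

theorem DTree.exists_shape_eq_and_eval_eq {ℓ : ℕ} {Y : Type} (i : Fin ℓ) (g : ℕ → Y)
    (T : TreeStruct) : ∀ a b : ℕ, b - a ≤ T.leaves → ∃ t : DTree ℓ Y, t.shape = T ∧
      ∀ j ∈ Finset.Ico a b, ∀ x, x i = (j : ℝ) → t.eval x = g j := by
  induction T with
  | leaf =>
    intro a b hab
    refine ⟨.leaf (g a), rfl, fun j hj x _ => ?_⟩
    rw [Finset.mem_Ico] at hj
    have hja : j = a := by simp only [TreeStruct.leaves] at hab; omega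
    rw [hja, DTree.eval]
  | node l r ihl ihr =>
    intro a b hab
    simp only [TreeStruct.leaves] at hab
    set mid := a + min (b - a) l.leaves
    obtain ⟨tl, hl, htl⟩ := ihl a mid (by omega)
    obtain ⟨tr, hr, htr⟩ := ihr mid b (by omega)
    -- sign `false` sends `x` left iff `x i ≤ mid - 1 / 2`, i.e. iff `j < mid`
    refine ⟨.node i ((mid : ℝ) - 1 / 2) false tl tr, by rw [DTree.shape, hl, hr],
      fun j hj x hx => ?_⟩
    rw [Finset.mem_Ico] at hj
    rw [DTree.eval, hx]
    rcases lt_or_ge j mid with hjm | hjm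
    · have hjθ : ¬ (mid : ℝ) - 1 / 2 < j := by
        have : (j : ℝ) + 1 ≤ mid := by exact_mod_cast hjm
        linarith
      rw [if_pos (by simpa using hjθ)]
      exact htl j (Finset.mem_Ico.mpr ⟨hj.1, hjm⟩) x hx
    · have hjθ : (mid : ℝ) - 1 / 2 < j := by
        have : (mid : ℝ) ≤ j := by exact_mod_cast hjm
        linarith
      rw [if_neg (by simpa using hjθ)]
      exact htr j (Finset.mem_Ico.mpr ⟨hjm, hj.2⟩) x hx

def natDiagonal (ℓ : ℕ) (i : Fin ℓ) : ℕ ↪ (Fin ℓ → ℝ) :=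
  ⟨fun j _ => j, fun a b h => by simpa using congrFun h i⟩

theorem partSet_natDiagonal {ℓ : ℕ} (i : Fin ℓ) {T : TreeStruct} {m : ℕ} (hm : m ≤ T.leaves)
    (c : ℕ) :
    PartSet ℓ T c ((Finset.range m).map (natDiagonal ℓ i)) =
      {P | IsPartition ((Finset.range m).map (natDiagonal ℓ i)) c P} := by
  refine Set.Subset.antisymm (fun P hP => hP.1) fun P hP => ⟨hP, ?_⟩
  obtain ⟨f, hf⟩ := hP.exists_label
  obtain ⟨t, ht, hte⟩ := DTree.exists_shape_eq_and_eval_eq i (f ∘ natDiagonal ℓ i) T 0 m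
    (by omega)
  have heval : ∀ x ∈ (Finset.range m).map (natDiagonal ℓ i), t.eval x = f x := by
    intro x hx
    obtain ⟨j, hj, rfl⟩ := Finset.mem_map.mp hx
    exact hte j (by simpa using hj) _ rfl
  refine ⟨t, ht, fun x hx y hy => ?_⟩
  rw [hf x hx y hy, heval x hx, heval y hy]

theorem tree_partitioning_eq_stirling_of_small_sample_general
    (ℓ : ℕ) (hℓ : 1 ≤ ℓ) (T : TreeStruct)
    (c m : ℕ) (hm : m ≤ T.leaves) :
    treePi ℓ T c m = stirlingSnd m c := by
  refine IsGreatest.csSup_eq ⟨?_, ?_⟩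
  · let S₀ := (Finset.range m).map (natDiagonal ℓ ⟨0, hℓ⟩)
    have hS₀ : S₀.card = m := by rw [Finset.card_map, Finset.card_range]
    refine ⟨S₀, hS₀, ?_⟩
    rw [partSet_natDiagonal _ hm, ncard_setOf_isPartition_eq_stirlingSnd hS₀]
  · rintro n ⟨S, hS, rfl⟩
    rw [← ncard_setOf_isPartition_eq_stirlingSnd hS c]
    exact Set.ncard_le_ncard (fun P hP => hP.1) (finite_setOf_isPartition S c)

theorem tree_partitioning_eq_stirling_of_small_sample
    (ℓ : ℕ) (hℓ : 1 ≤ ℓ) (T : TreeStruct) (hT : 1 ≤ T.internals)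
    (c m : ℕ) (hc : 1 ≤ c) (hcm : c ≤ m) (hm : m ≤ T.leaves) :
    treePi ℓ T c m = stirlingSnd m c :=
  tree_partitioning_eq_stirling_of_small_sample_general ℓ hℓ T c m hm
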